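/- If λ and μ are unimodular complex numbers such that λ/μ is a primitive k-th root of unity with k odd, then sup { |λⁿ - μⁿ| : n = 1, 2, 3, … } = |1 - e^{iπ(k-1)/k}|. -/

import Mathlib

/-!
With `ζ = l / m` we have `‖lⁿ - mⁿ‖ = ‖ζⁿ - 1‖`, and the powers `ζⁿ` (`n ≥ 1`) run
through all `k`-th roots of unity `ωᵗ = exp (2πit/k)`, `t < k`. The chord
`‖ωᵗ - 1‖ = 2 |sin (πt/k)|` is largest at `t = (k - 1)/2`, an integer since `k` is odd,
and `ω^((k-1)/2) = exp (iπ(k-1)/k)`.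
-/

open Complex

lemma norm_pow_sub_pow_eq_norm_div_pow_sub_one {l m : ℂ} (hm : ‖m‖ = 1) (n : ℕ) :
    ‖l ^ n - m ^ n‖ = ‖(l / m) ^ n - 1‖ := by
  have hm0 : m ≠ 0 := norm_ne_zero_iff.mp (hm ▸ one_ne_zero)
  rw [div_pow, div_sub_one (pow_ne_zero n hm0), norm_div, norm_pow, hm, one_pow, div_one]

lemma exp_two_pi_I_div_pow (k t : ℕ) :
    exp (2 * Real.pi * I / k) ^ t = exp (I * ↑(2 * Real.pi * t / k)) := by
  rw [← exp_nat_mul]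
  push_cast
  ring_nf

lemma norm_exp_two_pi_I_div_pow_sub_one (k t : ℕ) :
    ‖exp (2 * Real.pi * I / k) ^ t - 1‖ = 2 * |Real.sin (Real.pi * t / k)| := by
  rw [exp_two_pi_I_div_pow, norm_exp_I_mul_ofReal_sub_one, norm_mul, Real.norm_two,
    Real.norm_eq_abs]
  ring_nf

lemma abs_sin_pi_mul_div_le_of_le {s a k : ℕ} (hs : s ≤ a) (hak : 2 * a ≤ k) :
    |Real.sin (Real.pi * s / k)| ≤ |Real.sin (Real.pi * a / k)| := by
  have hs0 : 0 ≤ Real.pi * s / k := by positivity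
  have hsa : Real.pi * s / k ≤ Real.pi * a / k := by gcongr
  have ha : Real.pi * a / k ≤ Real.pi / 2 := by
    have : (a : ℝ) / k ≤ 1 / 2 :=
      div_le_of_le_mul₀ k.cast_nonneg (by norm_num)
        (by linarith [(show (2 * a : ℝ) ≤ k by exact_mod_cast hak)])
    rw [mul_div_assoc]
    nlinarith [Real.pi_pos]
  rw [abs_of_nonneg (Real.sin_nonneg_of_nonneg_of_le_pi hs0 (by linarith [Real.pi_pos])),
    abs_of_nonneg (Real.sin_nonneg_of_nonneg_of_le_pi (by linarith) (by linarith [Real.pi_pos]))]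
  exact Real.sin_le_sin_of_le_of_le_pi_div_two (by linarith [Real.pi_pos]) ha hsa

lemma abs_sin_pi_mul_div_le {t a k : ℕ} (ht : t < k) (hk : k = 2 * a + 1) :
    |Real.sin (Real.pi * t / k)| ≤ |Real.sin (Real.pi * a / k)| := by
  rcases le_or_gt t a with hta | hta
  · exact abs_sin_pi_mul_div_le_of_le hta (by omega)
  · have hsym : Real.sin (Real.pi * t / k) = Real.sin (Real.pi * ↑(k - t) / k) := by
      have hk0 : (k : ℝ) ≠ 0 := Nat.cast_ne_zero.mpr (by omega)
      rw [← Real.sin_pi_sub, Nat.cast_sub ht.le]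
      congr 1
      field_simp
    rw [hsym]
    exact abs_sin_pi_mul_div_le_of_le (by omega) (by omega)

lemma exp_pi_mul_pred_div_mul_I {a k : ℕ} (hk : k = 2 * a + 1) :
    exp (Real.pi * ((k : ℝ) - 1) / k * I) = exp (2 * Real.pi * I / k) ^ a := by
  rw [← exp_nat_mul]
  congr 1
  subst hk
  push_cast
  ring

theorem sup_pow_diff_odd_root_of_unity_general (l m : ℂ)
    (hm : ‖m‖ = 1) (k : ℕ) (hk : Odd k)
    (h : IsPrimitiveRoot (l / m) k) :
    sSup {r : ℝ | ∃ n : ℕ, 1 ≤ n ∧ r = ‖l ^ n - m ^ n‖}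
      = ‖1 - Complex.exp (Real.pi * ((k : ℝ) - 1) / k * Complex.I)‖ := by
  obtain ⟨a, ha⟩ := hk
  have : NeZero k := ⟨by omega⟩
  set ω := exp (2 * Real.pi * I / k)
  have hω : IsPrimitiveRoot ω k := isPrimitiveRoot_exp k (NeZero.ne k)
  rw [exp_pi_mul_pred_div_mul_I ha, norm_sub_rev]
  refine IsGreatest.csSup_eq ⟨?_, ?_⟩
  · obtain ⟨i, -, hi⟩ := h.eq_pow_of_pow_eq_one (ξ := ω ^ a)
      (by rw [pow_right_comm, hω.pow_eq_one, one_pow])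
    -- shifting by the period `k` keeps the exponent positive even when `i = 0`
    refine ⟨i + k, by omega, ?_⟩
    rw [norm_pow_sub_pow_eq_norm_div_pow_sub_one hm, pow_add, h.pow_eq_one, mul_one, hi]
  · rintro r ⟨n, -, rfl⟩
    obtain ⟨t, ht, hζ⟩ := hω.eq_pow_of_pow_eq_one (ξ := (l / m) ^ n)
      (by rw [pow_right_comm, h.pow_eq_one, one_pow])
    rw [norm_pow_sub_pow_eq_norm_div_pow_sub_one hm, ← hζ, norm_exp_two_pi_I_div_pow_sub_one,
      norm_exp_two_pi_I_div_pow_sub_one]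
    gcongr 2 * ?_
    exact abs_sin_pi_mul_div_le ht ha

/-- If `λ`, `μ` are unimodular complex numbers such that `λ/μ` is a primitive `k`-th
root of unity with `k` odd, then
`sup { |λⁿ - μⁿ| : n = 1, 2, 3, … } = |1 - e^{iπ(k-1)/k}|`. -/
theorem sup_pow_diff_odd_root_of_unity (l m : ℂ) (hl : ‖l‖ = 1)
    (hm : ‖m‖ = 1) (k : ℕ) (hk : Odd k) (hk0 : 0 < k)
    (h : IsPrimitiveRoot (l / m) k) :
    sSup {r : ℝ | ∃ n : ℕ, 1 ≤ n ∧ r = ‖l ^ n - m ^ n‖}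
      = ‖1 - Complex.exp (Real.pi * ((k : ℝ) - 1) / k * Complex.I)‖ :=
  sup_pow_diff_odd_root_of_unity_general l m hm k hk h
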